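/- Let h ≥ 1, p ≥ 1 and θ ∈ (0, 1/(1+p)). Suppose F ⊆ ℝ² is bounded, ω ∈ F, and there exist constants C₁, C₂ > 0 and r₀ > 0 such that (i) for all 0 < r < R and all x ∈ F, N_r(B(x,R) ∩ F) ≤ C₁(R/r)^h, and (ii) for every 0 < s < r₀, B(ω, s) ∩ F can be covered by at most C₂·s/(s^{1+p}) = C₂·s^{−p} balls of radius s^{1+p}. Then there is a constant C₃ such that for all sufficiently small r > 0, N_r(B(ω, r^θ) ∩ F) ≤ C₃·(r^θ/r)^{h + (θp/(1−θ))(1−h)}. -/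
import Mathlib

open Metric

/-- The minimal number of balls of radius `r` needed to cover `E ⊆ ℝ²`. -/
noncomputable def covN (r : ℝ) (E : Set (EuclideanSpace ℝ (Fin 2))) : ℕ :=
  sInf {n : ℕ | ∃ S : Finset (EuclideanSpace ℝ (Fin 2)), S.card = n ∧
    E ⊆ ⋃ x ∈ S, Metric.ball x r}

lemma covN_le_of_cover {r : ℝ} {E : Set (EuclideanSpace ℝ (Fin 2))}
    {S : Finset (EuclideanSpace ℝ (Fin 2))} (hS : E ⊆ ⋃ x ∈ S, Metric.ball x r) :
    covN r E ≤ S.card :=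
  Nat.sInf_le ⟨S, rfl, hS⟩

lemma covN_exists {r : ℝ} (hr : 0 < r) (E : Set (EuclideanSpace ℝ (Fin 2)))
    (hE : Bornology.IsBounded E) :
    ∃ S : Finset (EuclideanSpace ℝ (Fin 2)), S.card = covN r E ∧
      E ⊆ ⋃ x ∈ S, Metric.ball x r := by
  have htb : TotallyBounded E := hE.isCompact_closure.totallyBounded.subset subset_closure
  obtain ⟨t, htfin, htcov⟩ := (totallyBounded_iff.mp htb) r hr
  have hne : {n : ℕ | ∃ S : Finset (EuclideanSpace ℝ (Fin 2)), S.card = n ∧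
      E ⊆ ⋃ x ∈ S, Metric.ball x r}.Nonempty := by
    refine ⟨htfin.toFinset.card, htfin.toFinset, rfl, ?_⟩
    simpa [Set.Finite.mem_toFinset] using htcov
  obtain ⟨S, hcard, hcov⟩ := Nat.sInf_mem hne
  exact ⟨S, hcard, hcov⟩

/-- Covering bound near a parabolic point: if `F ⊆ ℝ²` is bounded, satisfies the Assouad-type
covering estimate with exponent `h ≥ 1`, and near `ω ∈ F` the quantitative Leau–Fatou flower
bound holds (each `B(ω,s) ∩ F` is covered by `≤ C₂ s^{-p}` balls of radius `s^{1+p}`), then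
for `θ ∈ (0, 1/(1+p))` and all sufficiently small `r > 0`,
`N_r(B(ω, r^θ) ∩ F) ≤ C₃ (r^θ/r)^{h + (θp/(1-θ))(1-h)}`. -/
theorem lower_spectrum_cover_bound (h p θ : ℝ) (hh : 1 ≤ h) (hp : 1 ≤ p)
    (hθ0 : 0 < θ) (hθ1 : θ < 1 / (1 + p))
    (F : Set (EuclideanSpace ℝ (Fin 2))) (hF : Bornology.IsBounded F)
    (ω : EuclideanSpace ℝ (Fin 2)) (hω : ω ∈ F)
    (C₁ C₂ r₀ : ℝ) (hC₁ : 0 < C₁) (hC₂ : 0 < C₂) (hr₀ : 0 < r₀)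
    (hAssouad : ∀ r R : ℝ, 0 < r → r < R → ∀ x ∈ F,
      (covN r (Metric.ball x R ∩ F) : ℝ) ≤ C₁ * (R / r) ^ h)
    (hflower : ∀ s : ℝ, 0 < s → s < r₀ →
      ∃ S : Finset (EuclideanSpace ℝ (Fin 2)), (S.card : ℝ) ≤ C₂ * s ^ (-p) ∧
        Metric.ball ω s ∩ F ⊆ ⋃ x ∈ S, Metric.ball x (s ^ (1 + p))) :
    ∃ C₃ > (0 : ℝ), ∃ r₁ > (0 : ℝ), ∀ r : ℝ, 0 < r → r < r₁ →
      (covN r (Metric.ball ω (r ^ θ) ∩ F) : ℝ) ≤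
        C₃ * (r ^ θ / r) ^ (h + (θ * p / (1 - θ)) * (1 - h)) := by
  classical
  have hp0 : (0:ℝ) < 1 + p := by linarith
  have hθe : θ * (1 + p) < 1 := by
    have := (lt_div_iff₀ hp0).mp hθ1
    linarith
  have hθlt1 : θ < 1 := by nlinarith
  refine ⟨C₁ * C₂ * 2 ^ h, by positivity, min 1 (r₀ ^ (1/θ)), by positivity, ?_⟩
  intro r hr hrlt
  have hr1 : r < 1 := lt_of_lt_of_le hrlt (min_le_left _ _)
  have hs0 : 0 < r ^ θ := Real.rpow_pos_of_pos hr θ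
  have hsr₀ : r ^ θ < r₀ := by
    have h1 : r ^ θ < (r₀ ^ (1/θ)) ^ θ :=
      Real.rpow_lt_rpow hr.le (lt_of_lt_of_le hrlt (min_le_right _ _)) hθ0
    have h2 : (r₀ ^ (1/θ)) ^ θ = r₀ := by
      rw [← Real.rpow_mul hr₀.le, one_div, inv_mul_cancel₀ hθ0.ne', Real.rpow_one]
    rwa [h2] at h1
  obtain ⟨S, hScard, hScov⟩ := hflower (r ^ θ) hs0 hsr₀
  set ρ : ℝ := (r ^ θ) ^ (1 + p) with hρdef
  have hρ0 : 0 < ρ := Real.rpow_pos_of_pos hs0 _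
  have hρeq : ρ = r ^ (θ * (1 + p)) := (Real.rpow_mul hr.le θ (1 + p)).symm
  have hrρ : r < ρ := by
    rw [hρeq]
    calc r = r ^ (1:ℝ) := (Real.rpow_one r).symm
    _ < r ^ (θ * (1 + p)) := Real.rpow_lt_rpow_of_exponent_gt hr hr1 hθe
  -- bound the covering number of each piece
  have hpiece : ∀ x : EuclideanSpace ℝ (Fin 2),
      (covN r (Metric.ball x ρ ∩ F) : ℝ) ≤ C₁ * (2 * ρ / r) ^ h := by
    intro x
    rcases Set.eq_empty_or_nonempty (Metric.ball x ρ ∩ F) with he | ⟨y, hy⟩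
    · have : covN r (Metric.ball x ρ ∩ F) ≤ (∅ : Finset (EuclideanSpace ℝ (Fin 2))).card :=
        covN_le_of_cover (by simp [he])
      simp only [Finset.card_empty, Nat.le_zero] at this
      simp only [this, Nat.cast_zero]
      positivity
    · have hsub : Metric.ball x ρ ∩ F ⊆ Metric.ball y (2 * ρ) ∩ F := by
        rintro z ⟨hz, hzF⟩
        refine ⟨?_, hzF⟩
        have h1 := mem_ball.mp hz
        have h2 := mem_ball.mp hy.1
        rw [mem_ball]
        calc dist z y ≤ dist z x + dist x y := dist_triangle z x y
        _ = dist z x + dist y x := by rw [dist_comm x y]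
        _ < ρ + ρ := by linarith
        _ = 2 * ρ := by ring
      obtain ⟨T, hTcard, hTcov⟩ := covN_exists hr (Metric.ball y (2 * ρ) ∩ F)
        (hF.subset (Set.inter_subset_right))
      have h3 : covN r (Metric.ball x ρ ∩ F) ≤ T.card :=
        covN_le_of_cover (hsub.trans hTcov)
      calc (covN r (Metric.ball x ρ ∩ F) : ℝ) ≤ (T.card : ℝ) := by exact_mod_cast h3
      _ = (covN r (Metric.ball y (2 * ρ) ∩ F) : ℝ) := by rw [hTcard]
      _ ≤ C₁ * (2 * ρ / r) ^ h := hAssouad r (2 * ρ) hr (by linarith) y hy.2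
  -- pick covers of each piece and combine
  choose T hTcard hTcov using fun x : EuclideanSpace ℝ (Fin 2) =>
    covN_exists hr (Metric.ball x ρ ∩ F) (hF.subset (Set.inter_subset_right))
  have hUcov : Metric.ball ω (r ^ θ) ∩ F ⊆ ⋃ z ∈ S.biUnion T, Metric.ball z r := by
    rintro w hw
    obtain ⟨x, hxS, hxw⟩ := Set.mem_iUnion₂.mp (hScov hw)
    have : w ∈ Metric.ball x ρ ∩ F := ⟨hxw, hw.2⟩
    obtain ⟨z, hzT, hzw⟩ := Set.mem_iUnion₂.mp (hTcov x this)
    exact Set.mem_iUnion₂.mpr ⟨z, Finset.mem_biUnion.mpr ⟨x, hxS, hzT⟩, hzw⟩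
  have hmain : (covN r (Metric.ball ω (r ^ θ) ∩ F) : ℝ) ≤
      (S.card : ℝ) * (C₁ * (2 * ρ / r) ^ h) := by
    have h1 : covN r (Metric.ball ω (r ^ θ) ∩ F) ≤ (S.biUnion T).card :=
      covN_le_of_cover hUcov
    have h2 : ((S.biUnion T).card : ℝ) ≤ ∑ x ∈ S, ((T x).card : ℝ) := by
      exact_mod_cast Finset.card_biUnion_le
    have h3 : ∑ x ∈ S, ((T x).card : ℝ) ≤ ∑ x ∈ S, C₁ * (2 * ρ / r) ^ h := by
      refine Finset.sum_le_sum fun x _ => ?_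
      rw [hTcard x]
      exact hpiece x
    calc (covN r (Metric.ball ω (r ^ θ) ∩ F) : ℝ) ≤ ((S.biUnion T).card : ℝ) := by
          exact_mod_cast h1
    _ ≤ ∑ x ∈ S, ((T x).card : ℝ) := h2
    _ ≤ ∑ x ∈ S, C₁ * (2 * ρ / r) ^ h := h3
    _ = (S.card : ℝ) * (C₁ * (2 * ρ / r) ^ h) := by
          rw [Finset.sum_const, nsmul_eq_mul]
  have hfinal : (S.card : ℝ) * (C₁ * (2 * ρ / r) ^ h) ≤
      C₁ * C₂ * 2 ^ h * (r ^ θ / r) ^ (h + (θ * p / (1 - θ)) * (1 - h)) := by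
    have hSbd : (S.card : ℝ) ≤ C₂ * r ^ (-(θ * p)) := by
      have : (r ^ θ) ^ (-p) = r ^ (-(θ * p)) := by
        rw [← Real.rpow_mul hr.le, mul_neg]
      rwa [this] at hScard
    have hfac : (2 * ρ / r) ^ h = 2 ^ h * r ^ ((θ * (1 + p) - 1) * h) := by
      rw [hρeq, mul_div_assoc, Real.mul_rpow (by norm_num) (by positivity)]
      congr 1
      rw [show r ^ (θ * (1 + p)) / r = r ^ (θ * (1 + p) - 1) by
            rw [Real.rpow_sub hr, Real.rpow_one],
        ← Real.rpow_mul hr.le]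
    have hE : (r ^ θ / r) ^ (h + θ * p / (1 - θ) * (1 - h)) =
        r ^ (-(θ * p) + (θ * (1 + p) - 1) * h) := by
      have h1 : r ^ θ / r = r ^ (θ - 1) := by rw [Real.rpow_sub hr, Real.rpow_one]
      rw [h1, ← Real.rpow_mul hr.le]
      congr 1
      have hne : (1 : ℝ) - θ ≠ 0 := by linarith
      field_simp
      ring
    calc (S.card : ℝ) * (C₁ * (2 * ρ / r) ^ h)
        ≤ (C₂ * r ^ (-(θ * p))) * (C₁ * (2 ^ h * r ^ ((θ * (1 + p) - 1) * h))) := by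
          rw [hfac]
          exact mul_le_mul_of_nonneg_right hSbd (by positivity)
    _ = C₁ * C₂ * 2 ^ h * r ^ (-(θ * p) + (θ * (1 + p) - 1) * h) := by
          rw [Real.rpow_add hr]; ring
    _ = C₁ * C₂ * 2 ^ h * (r ^ θ / r) ^ (h + θ * p / (1 - θ) * (1 - h)) := by rw [hE]
  exact hmain.trans hfinal
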